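/- Let n = p+q and let (u,v) be a (p,q)-pair of permutations in S_n such that w₀u ≥ v in the Bruhat order, where w₀ is the longest element of S_n (w₀(i) = n+1−i) and w₀u denotes the composition w₀ ∘ u. Then there exists a unique (p,q)-clan γ avoiding the pattern (1,2,1,2) such that u(γ) = w₀u and v(γ) = v. -/

import Mathlib

open Finset Module

noncomputable section

/-- Symbols of an FS-pattern: `+`, `-`, `F` (first occurrence / opener),
`S` (second occurrence / closer). -/
inductive FSSymbol : Type
  | plus : FSSymbol
  | minus : FSSymbol
  | fst : FSSymbol
  | snd : FSSymbol
  deriving DecidableEq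

/-- A `(p,q)`-clan on `{1,…,p+q}` (positions are `Fin (p+q)`, `0`-based).
`symbol i = Sum.inl j` means positions `i` and `j` carry the same natural
number (they form an arc), and `symbol i = Sum.inr true` (resp. `false`)
means position `i` carries a `+` (resp. a `-`).  The number of `+`'s minus
the number of `-`'s equals `p - q`. -/
structure Clan (p q : ℕ) where
  symbol : Fin (p + q) → (Fin (p + q)) ⊕ Bool
  mate_ne : ∀ i j, symbol i = Sum.inl j → j ≠ i
  mate_invol : ∀ i j, symbol i = Sum.inl j → symbol j = Sum.inl i
  balance : (univ.filter fun i => symbol i = Sum.inr true).card + q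
      = (univ.filter fun i => symbol i = Sum.inr false).card + p

namespace Clan

variable {p q : ℕ}

/-- `γ(i;+)`: the number of `+` signs and of arcs `(s,t)` with `t ≤ i`
among the first `i` positions (`i` is `1`-based). -/
def cplus (γ : Clan p q) (i : ℕ) : ℕ :=
  (univ.filter fun k : Fin (p + q) =>
    k.val < i ∧ (γ.symbol k = Sum.inr true ∨ ∃ j, γ.symbol k = Sum.inl j ∧ j < k)).card

/-- `γ(i;-)`: the number of `-` signs and of arcs `(s,t)` with `t ≤ i`
among the first `i` positions (`i` is `1`-based). -/
def cminus (γ : Clan p q) (i : ℕ) : ℕ :=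
  (univ.filter fun k : Fin (p + q) =>
    k.val < i ∧ (γ.symbol k = Sum.inr false ∨ ∃ j, γ.symbol k = Sum.inl j ∧ j < k)).card

/-- `γ(i;j)`: the number of arcs `(s,t)` with `s ≤ i < j < t`
(`i`, `j` are `1`-based). -/
def cpair (γ : Clan p q) (i j : ℕ) : ℕ :=
  (univ.filter fun s : Fin (p + q) =>
    s.val < i ∧ ∃ t, γ.symbol s = Sum.inl t ∧ s < t ∧ j ≤ t.val).card

/-- The FS-pattern of a clan: signs stay, openers become `F`, closers `S`. -/
def FS (γ : Clan p q) (i : Fin (p + q)) : FSSymbol :=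
  match γ.symbol i with
  | Sum.inr true => FSSymbol.plus
  | Sum.inr false => FSSymbol.minus
  | Sum.inl j => if j < i then FSSymbol.snd else FSSymbol.fst

/-- A clan avoids the pattern `(1,2,1,2)` iff no two of its arcs cross. -/
def Avoids1212 (γ : Clan p q) : Prop :=
  ¬ ∃ i1 i2 i3 i4 : Fin (p + q), i1 < i2 ∧ i2 < i3 ∧ i3 < i4 ∧
      γ.symbol i1 = Sum.inl i3 ∧ γ.symbol i2 = Sum.inl i4

/-- `γ₊`: positions carrying a `+` or the second occurrence of a number. -/
def plusSet (γ : Clan p q) : Finset (Fin (p + q)) :=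
  univ.filter fun i => γ.symbol i = Sum.inr true ∨ ∃ j, γ.symbol i = Sum.inl j ∧ j < i

/-- `γ̃₊`: positions carrying a `+` or the first occurrence of a number. -/
def tplusSet (γ : Clan p q) : Finset (Fin (p + q)) :=
  univ.filter fun i => γ.symbol i = Sum.inr true ∨ ∃ j, γ.symbol i = Sum.inl j ∧ i < j

end Clan

/-- The rank matrix `r_w(i,j) = #{k ≤ i : w(k) ≤ j}` (`i`, `j` are `1`-based). -/
def rankMatrix {n : ℕ} (w : Equiv.Perm (Fin n)) (i j : ℕ) : ℕ :=
  (univ.filter fun k : Fin n => k.val < i ∧ (w k).val < j).card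

/-- `u` is the permutation `u(γ)`: it assigns the values `p, p-1, …, 1` to the
positions of `γ₊` taken in increasing order, and `n, n-1, …, p+1` to the
positions of `γ₋` taken in increasing order (values are `0`-based, so the
`1`-based value of `u` at `i` is `(u i).val + 1`). -/
def IsUPerm {p q : ℕ} (γ : Clan p q) (u : Equiv.Perm (Fin (p + q))) : Prop :=
  ∀ i : Fin (p + q),
    (i ∈ γ.plusSet → (u i).val + 1 + (γ.plusSet.filter fun j => j < i).card = p) ∧
    (i ∉ γ.plusSet →
      (u i).val + 1 + (univ.filter fun j => j ∉ γ.plusSet ∧ j < i).card = p + q)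

/-- `v` is the permutation `v(γ)`: it assigns the values `1, …, p` to the
positions of `γ̃₊` taken in increasing order, and `p+1, …, n` to the
positions of `γ̃₋` taken in increasing order (values are `0`-based). -/
def IsVPerm {p q : ℕ} (γ : Clan p q) (v : Equiv.Perm (Fin (p + q))) : Prop :=
  ∀ i : Fin (p + q),
    (i ∈ γ.tplusSet → (v i).val = (γ.tplusSet.filter fun j => j < i).card) ∧
    (i ∉ γ.tplusSet →
      (v i).val = p + (univ.filter fun j => j ∉ γ.tplusSet ∧ j < i).card)

/-- `E_j ⊆ ℂⁿ`: the span of the first `j` standard basis vectors, realized as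
the subspace of vectors vanishing in coordinates `≥ j`. -/
def Efirst (n j : ℕ) : Submodule ℂ (Fin n → ℂ) :=
  ⨅ k ∈ {k : Fin n | j ≤ k.val}, LinearMap.ker (LinearMap.proj k : (Fin n → ℂ) →ₗ[ℂ] ℂ)

/-- `Ẽ_j ⊆ ℂⁿ`: the span of the last `j` standard basis vectors, realized as
the subspace of vectors vanishing in coordinates `< n - j`. -/
def Elast (n j : ℕ) : Submodule ℂ (Fin n → ℂ) :=
  ⨅ k ∈ {k : Fin n | k.val < n - j}, LinearMap.ker (LinearMap.proj k : (Fin n → ℂ) →ₗ[ℂ] ℂ)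

/-- The projection `π : ℂⁿ → E_p` with kernel `Ẽ_q` (for `n = p + q`). -/
def projE (n p : ℕ) : (Fin n → ℂ) →ₗ[ℂ] (Fin n → ℂ) where
  toFun v := fun k => if k.val < p then v k else 0
  map_add' u v := by funext k; by_cases h : k.val < p <;> simp [h]
  map_smul' c v := by funext k; by_cases h : k.val < p <;> simp [h]

/-- A complete flag `F_0 ⊂ F_1 ⊂ ⋯ ⊂ F_n` in `ℂⁿ`, `dim F_i = i`. -/
structure CompleteFlag (n : ℕ) where
  F : Fin (n + 1) → Submodule ℂ (Fin n → ℂ)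
  mono : Monotone F
  finrank_eq : ∀ i, finrank ℂ ↥(F i) = i.val

/-- Membership of a complete flag in the set `Q_γ`: the three linear-algebraic
conditions of Theorem `orbit_description`. -/
def MemQ {p q : ℕ} (γ : Clan p q) (Fl : CompleteFlag (p + q)) : Prop :=
  (∀ i : ℕ, 1 ≤ i → ∀ hi : i ≤ p + q,
      finrank ℂ ↥(Fl.F ⟨i, by omega⟩ ⊓ Efirst (p + q) p) = γ.cplus i ∧
      finrank ℂ ↥(Fl.F ⟨i, by omega⟩ ⊓ Elast (p + q) q) = γ.cminus i) ∧
  (∀ i j : ℕ, 1 ≤ i → ∀ hij : i < j, ∀ hj : j ≤ p + q,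
      finrank ℂ ↥((Fl.F ⟨i, by omega⟩).map (projE (p + q) p) ⊔ Fl.F ⟨j, by omega⟩)
        = j + γ.cpair i j)

/-- Membership in `K = GL(p,ℂ) × GL(q,ℂ)`, the block-diagonal subgroup of
`GL(p+q, ℂ)`: all entries mixing the first `p` and last `q` coordinates
vanish. -/
def InK (p q : ℕ) (g : (Matrix (Fin (p + q)) (Fin (p + q)) ℂ)ˣ) : Prop :=
  ∀ i j : Fin (p + q), ¬(i.val < p ↔ j.val < p) →
    (g : Matrix (Fin (p + q)) (Fin (p + q)) ℂ) i j = 0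

/-- `Fl' = g · Fl`: the flag `Fl'` is obtained by applying the invertible
matrix `g` to each subspace of the flag `Fl`. -/
def FlagMapsTo {n : ℕ} (g : (Matrix (Fin n) (Fin n) ℂ)ˣ) (Fl Fl' : CompleteFlag n) : Prop :=
  ∀ i, Fl'.F i = (Fl.F i).map (Matrix.mulVecLin (g : Matrix (Fin n) (Fin n) ℂ))

/-- A partial matching of `{1,…,n}`, given by its set of arcs `(s,t)`, `s < t`;
distinct arcs are disjoint. -/
def IsPartialMatching {n : ℕ} (M : Finset (Fin n × Fin n)) : Prop :=
  (∀ a ∈ M, a.1 < a.2) ∧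
  ∀ a ∈ M, ∀ b ∈ M, a ≠ b → a.1 ≠ b.1 ∧ a.1 ≠ b.2 ∧ a.2 ≠ b.1 ∧ a.2 ≠ b.2

/-- The number of crossing pairs of arcs of `M` (each crossing pair counted
once, ordered by its smaller opener). -/
def crossNum {n : ℕ} (M : Finset (Fin n × Fin n)) : ℕ :=
  ((M ×ˢ M).filter fun ab =>
    ab.1.1 < ab.2.1 ∧ ab.2.1 < ab.1.2 ∧ ab.1.2 < ab.2.2).card

/-- `M` is a noncrossing partial matching whose openers are exactly the
`F`-positions of the pattern `d` and whose closers are exactly the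
`S`-positions of `d`. -/
def MatchesPattern {n : ℕ} (d : Fin n → FSSymbol) (M : Finset (Fin n × Fin n)) : Prop :=
  IsPartialMatching M ∧
  (∀ i : Fin n, (∃ t, (i, t) ∈ M) ↔ d i = FSSymbol.fst) ∧
  (∀ i : Fin n, (∃ s, (s, i) ∈ M) ↔ d i = FSSymbol.snd) ∧
  ¬ ∃ a ∈ M, ∃ b ∈ M, a.1 < b.1 ∧ b.1 < a.2 ∧ a.2 < b.2

/-- The values `{w(1),…,w(i)}` arranged in increasing order. -/
def sortedPrefix {n : ℕ} (w : Equiv.Perm (Fin n)) (i : ℕ) : List (Fin n) :=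
  Finset.sort ((univ.filter fun k : Fin n => k.val < i).image w) (· ≤ ·)

/-!
Put `A = {i | (w₀u)(i) ≤ p}` and `B = {i | v(i) ≤ p}`. Since `u` and `v` are shuffles, `u(γ) = w₀u`
and `v(γ) = v` say exactly that `γ₊ = A` and `γ̃₊ = B`. Such a clan carries `+` on `A ∩ B`, `-` off
`A ∪ B`, and its arcs open at `B \ A` and close at `A \ B`: it is a bracket word with a matching.
The Bruhat inequality in column `p` says that every prefix has at least as many opening as closing
brackets, so the word is balanced, and a balanced bracket word has exactly one noncrossing
matching: the bracket opened at `s` closes at the first position where the height drops below its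
value just after `s`.
-/

namespace Bracket

variable {n : ℕ}

def prefixCount (S : Finset (Fin n)) (i : ℕ) : ℕ := #{k ∈ S | k.val < i}

lemma prefixCount_add_card (S : Finset (Fin n)) {a b : ℕ} (hab : a ≤ b) :
    prefixCount S a + #{k ∈ S | a ≤ k.val ∧ k.val < b} = prefixCount S b := by
  rw [prefixCount, prefixCount, ← card_union_of_disjoint]
  · congr 1
    ext k
    by_cases hk : k ∈ S <;> simp [hk]
    omega
  · exact disjoint_filter.2 fun _ _ h1 h2 => by omega

lemma prefixCount_succ (S : Finset (Fin n)) (i : Fin n) :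
    prefixCount S ((i : ℕ) + 1) = prefixCount S i + if i ∈ S then 1 else 0 := by
  rw [← prefixCount_add_card S (Nat.le_succ i)]
  congr 1
  have : {k ∈ S | i.val ≤ k.val ∧ k.val < i.val + 1} = {k ∈ S | k = i} :=
    filter_congr fun k _ => by rw [Fin.ext_iff]; omega
  rw [this, filter_eq']
  split_ifs <;> simp

lemma prefixCount_of_le (S : Finset (Fin n)) {i : ℕ} (hi : n ≤ i) : prefixCount S i = #S := by
  rw [prefixCount, filter_true_of_mem fun k _ => k.isLt.trans_le hi]

variable (O C : Finset (Fin n))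

/-- The height of the bracket word with opening brackets at `O` and closing brackets at `C`,
after its first `i` letters. -/
def height (i : ℕ) : ℤ := prefixCount O i - prefixCount C i

lemma height_sub_height {a b : ℕ} (hab : a ≤ b) :
    height O C b - height O C a =
      #{k ∈ O | a ≤ k.val ∧ k.val < b} - #{k ∈ C | a ≤ k.val ∧ k.val < b} := by
  rw [height, height, ← prefixCount_add_card O hab, ← prefixCount_add_card C hab]
  push_cast
  ring

lemma height_sdiff (A B : Finset (Fin n)) (i : ℕ) :
    height (B \ A) (A \ B) i = prefixCount B i - prefixCount A i := by
  have hsdiff : ∀ S T : Finset (Fin n),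
      {k ∈ S \ T | k.val < i} = {k ∈ S | k.val < i} \ {k ∈ T | k.val < i} := by
    intro S T; ext; simp only [mem_filter, mem_sdiff]; tauto
  have hB := card_sdiff_add_card_inter {k ∈ B | k.val < i} {k ∈ A | k.val < i}
  have hA := card_sdiff_add_card_inter {k ∈ A | k.val < i} {k ∈ B | k.val < i}
  rw [inter_comm] at hA
  rw [height, prefixCount, prefixCount, prefixCount, prefixCount, hsdiff, hsdiff]
  omega

lemma height_succ (i : Fin n) :
    height O C (i + 1) = height O C i + (if i ∈ O then 1 else 0) - (if i ∈ C then 1 else 0) := by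
  rw [height, height, prefixCount_succ, prefixCount_succ]
  push_cast
  ring

variable {O C}

lemma height_succ_of_mem_left (hOC : Disjoint O C) {i : Fin n} (hi : i ∈ O) :
    height O C (i + 1) = height O C i + 1 := by
  rw [height_succ, if_pos hi, if_neg (disjoint_left.1 hOC hi)]
  ring

lemma height_succ_of_mem_right (hOC : Disjoint O C) {i : Fin n} (hi : i ∈ C) :
    height O C (i + 1) = height O C i - 1 := by
  rw [height_succ, if_pos hi, if_neg (disjoint_right.1 hOC hi)]
  ring

lemma height_of_le (hcard : #O = #C) {i : ℕ} (hi : n ≤ i) : height O C i = 0 := by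
  rw [height, prefixCount_of_le O hi, prefixCount_of_le C hi, hcard, sub_self]

variable (O C) in
def closer (s : Fin n) : Fin n :=
  if h : (univ.filter fun t : Fin n => s < t ∧ height O C (t + 1) < height O C (s + 1)).Nonempty
  then min' _ h
  else s

lemma closer_spec {s t : Fin n} (hst : s < t) (ht : height O C (t + 1) < height O C (s + 1)) :
    closer O C s ≤ t ∧ s < closer O C s ∧
      height O C (closer O C s + 1) < height O C (s + 1) := by
  have hmem : t ∈ univ.filter fun t : Fin n => s < t ∧ height O C (t + 1) < height O C (s + 1) := by
    simp [hst, ht]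
  rw [closer, dif_pos ⟨t, hmem⟩]
  refine ⟨min'_le _ _ hmem, ?_⟩
  simpa using min'_mem _ ⟨t, hmem⟩

lemma le_height_of_le_closer {s : Fin n} {m : ℕ} (hsm : s < m)
    (hm : m ≤ closer O C s) : height O C (s + 1) ≤ height O C m := by
  obtain ⟨k, rfl⟩ : ∃ k, m = k + 1 := ⟨m - 1, by omega⟩
  obtain rfl | hsk := (Nat.le_of_lt_succ hsm).eq_or_lt
  · rfl
  by_contra! hlt
  have hk : k < n := by omega
  exact absurd (closer_spec (t := ⟨k, hk⟩) hsk hlt).1 (not_le.2 (Fin.lt_def.2 hm))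

lemma closer_eq_of_height {s t : Fin n} (hst : s < t)
    (ht : height O C (t + 1) < height O C (s + 1))
    (hmin : ∀ m : ℕ, s < m → m ≤ t → height O C (s + 1) ≤ height O C m) :
    closer O C s = t := by
  obtain ⟨hle, hlt, hdrop⟩ := closer_spec hst ht
  refine le_antisymm hle (not_lt.1 fun hct => ?_)
  have := hmin (closer O C s + 1) (by omega) (by omega)
  omega

variable (O C) in
structure IsBalanced : Prop where
  disjoint : Disjoint O C
  card_eq : #O = #C
  height_nonneg : ∀ i, 0 ≤ height O C i

lemma isBalanced_sdiff {A B : Finset (Fin n)} (hAB : #A = #B)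
    (hballot : ∀ i, prefixCount A i ≤ prefixCount B i) : IsBalanced (B \ A) (A \ B) :=
  ⟨disjoint_sdiff_sdiff, card_sdiff_comm hAB.symm,
    fun i => by rw [height_sdiff]; have := hballot i; omega⟩

variable (O C) in
def opener (t : Fin n) : Fin n :=
  if h : ∃ s ∈ O, closer O C s = t then h.choose else t

variable (O C) in
def partner (i : Fin n) : Fin n :=
  if i ∈ O then closer O C i else if i ∈ C then opener O C i else i

lemma partner_of_mem_left {i : Fin n} (hi : i ∈ O) : partner O C i = closer O C i :=
  if_pos hi

namespace IsBalanced

variable (hw : IsBalanced O C)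
include hw

lemma exists_height_lt {s : Fin n} (hs : s ∈ O) :
    ∃ t, s < t ∧ height O C (t + 1) < height O C (s + 1) := by
  have hs1 : height O C (s + 1) = height O C s + 1 := height_succ_of_mem_left hw.disjoint hs
  have hlast : s.val + 1 ≠ n := fun h => by
    have := hw.height_nonneg s
    rw [h, height_of_le hw.card_eq le_rfl] at hs1
    omega
  refine ⟨⟨n - 1, by omega⟩, Fin.lt_def.2 (by simp only; omega), ?_⟩
  rw [show n - 1 + 1 = n by omega, height_of_le hw.card_eq le_rfl]
  have := hw.height_nonneg s
  omega

lemma lt_closer {s : Fin n} (hs : s ∈ O) : s < closer O C s :=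
  have ⟨_, hst, ht⟩ := hw.exists_height_lt hs
  (closer_spec hst ht).2.1

lemma closer_mem_and_height {s : Fin n} (hs : s ∈ O) :
    closer O C s ∈ C ∧ height O C (closer O C s + 1) = height O C (s + 1) - 1 := by
  obtain ⟨_, hst, ht⟩ := hw.exists_height_lt hs
  obtain ⟨-, hlt, hdrop⟩ := closer_spec hst ht
  have hle := le_height_of_le_closer (m := closer O C s) hlt le_rfl
  have hstep := height_succ O C (closer O C s)
  have hC : closer O C s ∈ C := by
    by_contra hC
    split_ifs at hstep <;> omega
  exact ⟨hC, by split_ifs at hstep <;> omega⟩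

lemma closer_mem {s : Fin n} (hs : s ∈ O) : closer O C s ∈ C :=
  (hw.closer_mem_and_height hs).1

lemma height_closer {s : Fin n} (hs : s ∈ O) :
    height O C (closer O C s + 1) = height O C (s + 1) - 1 :=
  (hw.closer_mem_and_height hs).2

lemma closer_lt_closer {s s' : Fin n} (hs : s ∈ O) (hs' : s' ∈ O) (hss' : s < s')
    (hs'c : s' < closer O C s) : closer O C s' < closer O C s := by
  have hup : height O C (s' + 1) = height O C s' + 1 := height_succ_of_mem_left hw.disjoint hs'
  have hge : height O C (s + 1) ≤ height O C s' := le_height_of_le_closer hss' hs'c.le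
  have hdown := hw.height_closer hs
  have hdown' := hw.height_closer hs'
  have hle : closer O C s' ≤ closer O C s := (closer_spec hs'c (by omega)).1
  refine hle.lt_of_ne fun heq => ?_
  rw [heq] at hdown'
  omega

lemma closer_injOn : Set.InjOn (closer O C) O := by
  intro s hs s' hs' heq
  by_contra hne
  rcases lt_or_gt_of_ne hne with h | h
  · exact (hw.closer_lt_closer hs hs' h (heq ▸ hw.lt_closer hs')).ne' heq
  · exact (hw.closer_lt_closer hs' hs h (heq ▸ hw.lt_closer hs)).ne heq

lemma image_closer : O.image (closer O C) = C :=
  eq_of_subset_of_card_le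
    (image_subset_iff.2 fun _ hs => hw.closer_mem hs)
    (by rw [card_image_of_injOn hw.closer_injOn, hw.card_eq])

lemma opener_spec {t : Fin n} (ht : t ∈ C) : opener O C t ∈ O ∧ closer O C (opener O C t) = t := by
  have h : ∃ s ∈ O, closer O C s = t := by
    rw [← hw.image_closer, mem_image] at ht
    exact ht
  rw [opener, dif_pos h]
  exact h.choose_spec

lemma opener_closer {s : Fin n} (hs : s ∈ O) : opener O C (closer O C s) = s :=
  have h := hw.opener_spec (hw.closer_mem hs)
  hw.closer_injOn h.1 hs h.2

lemma opener_lt {t : Fin n} (ht : t ∈ C) : opener O C t < t := by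
  have ⟨hO, hco⟩ := hw.opener_spec ht
  simpa only [hco] using hw.lt_closer hO

lemma partner_partner (i : Fin n) : partner O C (partner O C i) = i := by
  by_cases hO : i ∈ O
  · have hC := hw.closer_mem hO
    simp [partner, hO, hC, disjoint_right.1 hw.disjoint hC, hw.opener_closer hO]
  by_cases hC : i ∈ C
  · have ⟨hO', hco⟩ := hw.opener_spec hC
    simp [partner, hO, hC, hO', hco]
  · simp [partner, hO, hC]

lemma lt_partner_iff {i : Fin n} : i < partner O C i ↔ i ∈ O := by
  by_cases hO : i ∈ O
  · simp [partner, hO, hw.lt_closer hO]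
  by_cases hC : i ∈ C
  · simp [partner, hO, hC, (hw.opener_lt hC).le]
  · simp [partner, hO, hC]

lemma partner_lt_iff {i : Fin n} : partner O C i < i ↔ i ∈ C := by
  by_cases hC : i ∈ C
  · simp [partner, disjoint_right.1 hw.disjoint hC, hC, hw.opener_lt hC]
  by_cases hO : i ∈ O
  · simp [partner, hO, hC, (hw.lt_closer hO).le]
  · simp [partner, hO, hC]

lemma partner_eq_self_iff {i : Fin n} : partner O C i = i ↔ i ∉ O ∧ i ∉ C := by
  rw [← hw.lt_partner_iff, ← hw.partner_lt_iff]
  refine ⟨fun h => by simp [h], fun ⟨h1, h2⟩ => le_antisymm (not_lt.1 h1) (not_lt.1 h2)⟩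

end IsBalanced

end Bracket

namespace Clan

open Bracket

variable {p q : ℕ} (γ : Clan p q)

def partner (i : Fin (p + q)) : Fin (p + q) := Sum.elim id (fun _ => i) (γ.symbol i)

variable {γ}

lemma partner_eq_of_symbol_eq_inl {i j : Fin (p + q)} (h : γ.symbol i = .inl j) :
    γ.partner i = j := by
  simp [partner, h]

lemma symbol_eq_ite (i : Fin (p + q)) :
    γ.symbol i = if γ.partner i = i then .inr (decide (i ∈ γ.plusSet)) else .inl (γ.partner i) := by
  rcases h : γ.symbol i with j | b
  · simp [partner, h, γ.mate_ne i j h]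
  · cases b <;> simp [partner, plusSet, h]

lemma symbol_eq_inl_partner {i : Fin (p + q)} (h : γ.partner i ≠ i) :
    γ.symbol i = .inl (γ.partner i) := by
  rw [symbol_eq_ite, if_neg h]

variable (γ) in
lemma partner_partner (i : Fin (p + q)) : γ.partner (γ.partner i) = i := by
  rcases h : γ.symbol i with j | b
  · rw [partner_eq_of_symbol_eq_inl h, partner_eq_of_symbol_eq_inl (γ.mate_invol i j h)]
  · simp [partner, h]

lemma partner_injective : Function.Injective γ.partner :=
  Function.LeftInverse.injective γ.partner_partner

lemma mem_plusSet_sdiff_tplusSet {i : Fin (p + q)} :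
    i ∈ γ.plusSet \ γ.tplusSet ↔ γ.partner i < i := by
  rcases h : γ.symbol i with j | b
  · simp +contextual [plusSet, tplusSet, partner, h, le_of_lt]
  · cases b <;> simp [plusSet, tplusSet, partner, h]

lemma mem_tplusSet_sdiff_plusSet {i : Fin (p + q)} :
    i ∈ γ.tplusSet \ γ.plusSet ↔ i < γ.partner i := by
  rcases h : γ.symbol i with j | b
  · simp +contextual [plusSet, tplusSet, partner, h, le_of_lt]
  · cases b <;> simp [plusSet, tplusSet, partner, h]

lemma mem_plusSet_inter_tplusSet {i : Fin (p + q)} :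
    i ∈ γ.plusSet ∩ γ.tplusSet ↔ γ.symbol i = .inr true := by
  rcases h : γ.symbol i with j | b
  · simp +contextual [plusSet, tplusSet, h, le_of_lt]
  · cases b <;> simp [plusSet, tplusSet, h]

lemma notMem_plusSet_union_tplusSet {i : Fin (p + q)} :
    i ∉ γ.plusSet ∪ γ.tplusSet ↔ γ.symbol i = .inr false := by
  rcases h : γ.symbol i with j | b
  · simpa [plusSet, tplusSet, h] using γ.mate_ne i j h
  · cases b <;> simp [plusSet, tplusSet, h]

variable (γ) in
lemma card_plusSet_sdiff_tplusSet :
    #(γ.plusSet \ γ.tplusSet) = #(γ.tplusSet \ γ.plusSet) :=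
  card_nbij' γ.partner γ.partner
    (fun i hi => by
      rw [mem_coe, mem_plusSet_sdiff_tplusSet] at hi
      rwa [mem_coe, mem_tplusSet_sdiff_plusSet, γ.partner_partner])
    (fun i hi => by
      rw [mem_coe, mem_tplusSet_sdiff_plusSet] at hi
      rwa [mem_coe, mem_plusSet_sdiff_tplusSet, γ.partner_partner])
    (fun i _ => γ.partner_partner i) (fun i _ => γ.partner_partner i)

variable (γ) in
lemma card_plusSet_eq_card_tplusSet : #γ.plusSet = #γ.tplusSet :=
  card_sdiff_eq_card_sdiff_iff.1 γ.card_plusSet_sdiff_tplusSet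

variable (γ) in
/-- `γ₊` and `γ̃₊` both consist of the `+` signs and one end of each arc, so
`2 #γ₊ = #(γ₊ ∪ γ̃₊) + #(γ₊ ∩ γ̃₊) = n - #(-) + #(+) = 2p` by the balance condition. -/
lemma card_plusSet : #γ.plusSet = p := by
  have hPT := γ.card_plusSet_eq_card_tplusSet
  have hinter : #(γ.plusSet ∩ γ.tplusSet) = #{i | γ.symbol i = .inr true} :=
    congrArg card (by ext; simp [← mem_plusSet_inter_tplusSet])
  have hunion : #(γ.plusSet ∪ γ.tplusSet)ᶜ = #{i | γ.symbol i = .inr false} :=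
    congrArg card (by ext; simp [← notMem_plusSet_union_tplusSet])
  have := card_union_add_card_inter γ.plusSet γ.tplusSet
  have := γ.balance
  rw [card_compl, Fintype.card_fin] at hunion
  have := card_le_univ (γ.plusSet ∪ γ.tplusSet)
  rw [Fintype.card_fin] at this
  omega

variable (γ) in
lemma card_tplusSet : #γ.tplusSet = p :=
  γ.card_plusSet_eq_card_tplusSet ▸ γ.card_plusSet

section Noncrossing

variable {γ : Clan p q}

lemma Avoids1212.partner_mem_Ioo (hγ : γ.Avoids1212) {s k : Fin (p + q)} (hsk : s < k)
    (hkt : k < γ.partner s) : γ.partner k ∈ Set.Ioo s (γ.partner s) := by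
  by_cases hk : γ.partner k = k
  · rw [hk]; exact ⟨hsk, hkt⟩
  have hs := symbol_eq_inl_partner (hsk.trans hkt).ne'
  have hk' := symbol_eq_inl_partner hk
  constructor
  · refine lt_of_le_of_ne (not_lt.1 fun h => hγ ⟨γ.partner k, s, k, γ.partner s, h, hsk, hkt,
      γ.mate_invol k _ hk', hs⟩) fun h => hkt.ne ?_
    rw [h, γ.partner_partner]
  · refine lt_of_le_of_ne (not_lt.1 fun h => hγ ⟨s, k, γ.partner s, γ.partner k, hsk, hkt, h,
      hs, hk'⟩) fun h => hsk.ne' ?_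
    rw [← γ.partner_partner k, h, γ.partner_partner]

lemma Avoids1212.height_le (hγ : γ.Avoids1212) {s : Fin (p + q)} {m : ℕ} (hsm : s < m)
    (hmt : m ≤ γ.partner s) :
    height (γ.tplusSet \ γ.plusSet) (γ.plusSet \ γ.tplusSet) (s + 1) ≤
      height (γ.tplusSet \ γ.plusSet) (γ.plusSet \ γ.tplusSet) m := by
  have hsub := height_sub_height (γ.tplusSet \ γ.plusSet) (γ.plusSet \ γ.tplusSet)
    (a := s + 1) (b := m) (by omega)
  have : #{k ∈ γ.plusSet \ γ.tplusSet | (s : ℕ) + 1 ≤ k.val ∧ k.val < m} ≤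
      #{k ∈ γ.tplusSet \ γ.plusSet | (s : ℕ) + 1 ≤ k.val ∧ k.val < m} := by
    refine card_le_card_of_injOn γ.partner (fun k hk => ?_) partner_injective.injOn
    simp only [mem_coe, mem_filter, mem_plusSet_sdiff_tplusSet,
      mem_tplusSet_sdiff_plusSet, γ.partner_partner] at hk ⊢
    obtain ⟨h1, h2⟩ := hγ.partner_mem_Ioo (s := s) (k := k) (by omega) (by omega)
    omega
  omega

lemma Avoids1212.height_partner_le (hγ : γ.Avoids1212) {s : Fin (p + q)}
    (hst : s < γ.partner s) :
    height (γ.tplusSet \ γ.plusSet) (γ.plusSet \ γ.tplusSet) (γ.partner s) ≤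
      height (γ.tplusSet \ γ.plusSet) (γ.plusSet \ γ.tplusSet) (s + 1) := by
  have hsub := height_sub_height (γ.tplusSet \ γ.plusSet) (γ.plusSet \ γ.tplusSet)
    (a := s + 1) (b := γ.partner s) (by omega)
  have : #{k ∈ γ.tplusSet \ γ.plusSet | (s : ℕ) + 1 ≤ k.val ∧ k.val < (γ.partner s : ℕ)} ≤
      #{k ∈ γ.plusSet \ γ.tplusSet | (s : ℕ) + 1 ≤ k.val ∧ k.val < (γ.partner s : ℕ)} := by
    refine card_le_card_of_injOn γ.partner (fun k hk => ?_) partner_injective.injOn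
    simp only [mem_coe, mem_filter, mem_plusSet_sdiff_tplusSet,
      mem_tplusSet_sdiff_plusSet, γ.partner_partner] at hk ⊢
    obtain ⟨h1, h2⟩ := hγ.partner_mem_Ioo (s := s) (k := k) (by omega) (by omega)
    omega
  omega

lemma Avoids1212.closer_eq_partner (hγ : γ.Avoids1212) {s : Fin (p + q)}
    (hst : s < γ.partner s) :
    closer (γ.tplusSet \ γ.plusSet) (γ.plusSet \ γ.tplusSet) s = γ.partner s := by
  have hC : γ.partner s ∈ γ.plusSet \ γ.tplusSet := by
    rwa [mem_plusSet_sdiff_tplusSet, γ.partner_partner]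
  have hstep := height_succ_of_mem_right disjoint_sdiff_sdiff hC
  have := hγ.height_partner_le hst
  exact closer_eq_of_height hst (by omega) fun _ hsm hmt => hγ.height_le hsm hmt

end Noncrossing

lemma ext_of_partner {γ γ' : Clan p q} (hP : γ.plusSet = γ'.plusSet)
    (h : γ.partner = γ'.partner) : γ = γ' := by
  have hsymbol : γ.symbol = γ'.symbol := funext fun i => by rw [symbol_eq_ite, symbol_eq_ite, hP, h]
  cases γ
  cases γ'
  cases hsymbol
  rfl

section Uniqueness

variable {γ γ' : Clan p q} (hγ : γ.Avoids1212) (hγ' : γ'.Avoids1212)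
  (hP : γ.plusSet = γ'.plusSet) (hT : γ.tplusSet = γ'.tplusSet)
include hγ hγ' hP hT

lemma partner_eq_of_lt_partner {s : Fin (p + q)} (hs : s < γ.partner s) :
    γ'.partner s = γ.partner s := by
  have hs' : s < γ'.partner s := by
    rwa [← mem_tplusSet_sdiff_plusSet, ← hP, ← hT, mem_tplusSet_sdiff_plusSet]
  rw [← hγ.closer_eq_partner hs, ← hγ'.closer_eq_partner hs', hP, hT]

lemma eq_of_avoids1212 : γ = γ' := by
  refine ext_of_partner hP (funext fun i => ?_)
  rcases lt_trichotomy i (γ.partner i) with h | h | h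
  · exact (partner_eq_of_lt_partner hγ hγ' hP hT h).symm
  · have hO : ¬ i < γ'.partner i := by
      rw [← mem_tplusSet_sdiff_plusSet, ← hP, ← hT, mem_tplusSet_sdiff_plusSet]
      exact h.not_lt
    have hC : ¬ γ'.partner i < i := by
      rw [← mem_plusSet_sdiff_tplusSet, ← hP, ← hT, mem_plusSet_sdiff_tplusSet]
      exact h.not_gt
    rw [← h]
    exact le_antisymm (not_lt.1 hC) (not_lt.1 hO)
  · have h' : γ.partner i < γ.partner (γ.partner i) := by rwa [γ.partner_partner]
    have := partner_eq_of_lt_partner hγ hγ' hP hT h'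
    rw [γ.partner_partner] at this
    exact (γ'.partner_partner _).symm.trans (congrArg γ'.partner this)

end Uniqueness

section Existence

def ofBalancedSymbol {n : ℕ} (A B : Finset (Fin n)) (i : Fin n) : Fin n ⊕ Bool :=
  if Bracket.partner (B \ A) (A \ B) i = i then .inr (decide (i ∈ A))
  else .inl (Bracket.partner (B \ A) (A \ B) i)

lemma ofBalancedSymbol_eq_inr_iff {n : ℕ} {A B : Finset (Fin n)} (hw : IsBalanced (B \ A) (A \ B))
    {i : Fin n} {b : Bool} : ofBalancedSymbol A B i = .inr b ↔ (i ∈ A ↔ b) ∧ (i ∈ B ↔ b) := by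
  by_cases hiA : i ∈ A <;> by_cases hiB : i ∈ B <;> cases b <;>
    simp [ofBalancedSymbol, hw.partner_eq_self_iff, hiA, hiB]

def ofBalanced (A B : Finset (Fin (p + q))) (hA : #A = p) (hw : IsBalanced (B \ A) (A \ B)) :
    Clan p q where
  symbol := ofBalancedSymbol A B
  mate_ne i j h := by
    rw [ofBalancedSymbol] at h
    split_ifs at h with hi
    cases h
    exact hi
  mate_invol i j h := by
    rw [ofBalancedSymbol] at h
    split_ifs at h with hi
    cases h
    rw [ofBalancedSymbol, hw.partner_partner, if_neg (Ne.symm hi)]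
  balance := by
    simp only [ofBalancedSymbol_eq_inr_iff hw, iff_true, Bool.false_eq_true, iff_false]
    have hAB : #A = #B := (card_sdiff_eq_card_sdiff_iff.1 hw.card_eq).symm
    have hinter : #{i | i ∈ A ∧ i ∈ B} = #(A ∩ B) := by congr 1; ext; simp
    have hunion : #{i | i ∉ A ∧ i ∉ B} = #(A ∪ B)ᶜ := by congr 1; ext; simp
    have := card_union_add_card_inter A B
    have := card_le_univ (A ∪ B)
    rw [Fintype.card_fin] at this
    rw [hinter, hunion, card_compl, Fintype.card_fin]
    omega

variable {A B : Finset (Fin (p + q))} (hA : #A = p) (hw : IsBalanced (B \ A) (A \ B))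

lemma partner_ofBalanced : (ofBalanced A B hA hw).partner = Bracket.partner (B \ A) (A \ B) := by
  funext i
  by_cases hi : Bracket.partner (B \ A) (A \ B) i = i <;>
    simp [Clan.partner, ofBalanced, ofBalancedSymbol, hi]

lemma plusSet_ofBalanced : (ofBalanced A B hA hw).plusSet = A := by
  ext i
  rw [← sdiff_union_inter (ofBalanced A B hA hw).plusSet, mem_union, mem_plusSet_sdiff_tplusSet,
    mem_plusSet_inter_tplusSet, partner_ofBalanced, hw.partner_lt_iff]
  change _ ∨ ofBalancedSymbol A B i = _ ↔ _
  rw [ofBalancedSymbol_eq_inr_iff hw, mem_sdiff]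
  tauto

lemma tplusSet_ofBalanced : (ofBalanced A B hA hw).tplusSet = B := by
  ext i
  rw [← sdiff_union_inter (ofBalanced A B hA hw).tplusSet, mem_union, mem_tplusSet_sdiff_plusSet,
    inter_comm, mem_plusSet_inter_tplusSet, partner_ofBalanced, hw.lt_partner_iff]
  change _ ∨ ofBalancedSymbol A B i = _ ↔ _
  rw [ofBalancedSymbol_eq_inr_iff hw, mem_sdiff]
  tauto

lemma avoids1212_ofBalanced : (ofBalanced A B hA hw).Avoids1212 := by
  rintro ⟨i1, i2, i3, i4, h12, h23, h34, h13, h24⟩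
  have e13 := partner_eq_of_symbol_eq_inl h13
  have e24 := partner_eq_of_symbol_eq_inl h24
  rw [partner_ofBalanced] at e13 e24
  have hO1 : i1 ∈ B \ A := hw.lt_partner_iff.1 (e13 ▸ h12.trans h23)
  have hO2 : i2 ∈ B \ A := hw.lt_partner_iff.1 (e24 ▸ h23.trans h34)
  rw [partner_of_mem_left hO1] at e13
  rw [partner_of_mem_left hO2] at e24
  have := hw.closer_lt_closer hO1 hO2 h12 (e13 ▸ h23)
  rw [e13, e24] at this
  exact (h34.trans this).false

end Existence

theorem existsUnique_avoids1212 {A B : Finset (Fin (p + q))} (hA : #A = p)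
    (hw : IsBalanced (B \ A) (A \ B)) :
    ∃! γ : Clan p q, γ.Avoids1212 ∧ γ.plusSet = A ∧ γ.tplusSet = B :=
  ⟨ofBalanced A B hA hw,
    ⟨avoids1212_ofBalanced hA hw, plusSet_ofBalanced hA hw, tplusSet_ofBalanced hA hw⟩,
    fun _ ⟨hγ, hP, hT⟩ => eq_of_avoids1212 hγ (avoids1212_ofBalanced hA hw)
      (hP.trans (plusSet_ofBalanced hA hw).symm) (hT.trans (tplusSet_ofBalanced hA hw).symm)⟩

end Clan

section Shuffle

open Equiv

variable {n : ℕ}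

lemma card_filter_le_val_lt {a b : ℕ} (hb : b ≤ n) :
    #{k : Fin n | a ≤ k.val ∧ k.val < b} = b - a := by
  rw [← Nat.card_Ico, ← card_map Fin.valEmbedding]
  congr 1
  ext x
  simp only [mem_map, mem_filter, mem_univ, true_and, Fin.valEmbedding_apply, mem_Ico]
  exact ⟨fun ⟨k, hk, hkx⟩ => hkx ▸ hk, fun hx => ⟨⟨x, by omega⟩, hx, rfl⟩⟩

lemma card_filter_lt_of_strictMonoOn {e : Perm (Fin n)} {Q : Fin n → Prop} [DecidablePred Q]
    (he : StrictMonoOn e {j | Q (e j)}) {i : Fin n} (hi : Q (e i)) :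
    #{j | Q (e j) ∧ j < i} = #{k | Q k ∧ k < e i} :=
  card_equiv e fun j => by
    simp only [mem_filter, mem_univ, true_and]
    exact and_congr_right fun hj => (he.lt_iff_lt hj hi).symm

lemma card_filter_lt_of_strictAntiOn {e : Perm (Fin n)} {Q : Fin n → Prop} [DecidablePred Q]
    (he : StrictAntiOn e {j | Q (e j)}) {i : Fin n} (hi : Q (e i)) :
    #{j | Q (e j) ∧ j < i} = #{k | Q k ∧ e i < k} :=
  card_equiv e fun j => by
    simp only [mem_filter, mem_univ, true_and]
    exact and_congr_right fun hj => (he.lt_iff_gt hi hj).symm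

lemma card_filter_apply_val_lt (e : Perm (Fin n)) {p : ℕ} (hp : p ≤ n) :
    #{i | (e i).val < p} = p := by
  rw [card_equiv e (t := univ.filter fun k : Fin n => k.val < p) (by simp), Fin.card_filter_val_lt,
    min_eq_right hp]

lemma Equiv.strictMonoOn_of_symm {α β : Type*} [LinearOrder α] [LinearOrder β] {e : α ≃ β}
    {t : Set β} (h : StrictMonoOn e.symm t) : StrictMonoOn e (e ⁻¹' t) :=
  fun a ha b hb hab => (h.lt_iff_lt ha hb).1 (by simpa using hab)

lemma Equiv.strictAntiOn_of_symm {α β : Type*} [LinearOrder α] [LinearOrder β] {e : α ≃ β}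
    {t : Set β} (h : StrictAntiOn e.symm t) : StrictAntiOn e (e ⁻¹' t) :=
  fun a ha b hb hab => (h.lt_iff_gt ha hb).1 (by simpa using hab)

lemma strictMonoOn_of_shuffle {v : Perm (Fin n)} {p : ℕ}
    (hv : ∀ k l : Fin n, k < l → (l.val < p ∨ p ≤ k.val) → v.symm k < v.symm l) :
    StrictMonoOn v {i | (v i).val < p} ∧ StrictMonoOn v {i | p ≤ (v i).val} :=
  ⟨Equiv.strictMonoOn_of_symm (t := {k : Fin n | k.val < p}) fun k _ l hl hkl =>
      hv k l hkl (Or.inl hl),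
    Equiv.strictMonoOn_of_symm (t := {k : Fin n | p ≤ k.val}) fun k hk l _ hkl =>
      hv k l hkl (Or.inr hk)⟩

lemma strictAntiOn_revPerm_mul_of_shuffle {p q : ℕ} {u : Perm (Fin (p + q))}
    (hu : ∀ k l : Fin (p + q), k < l → (l.val < q ∨ q ≤ k.val) → u.symm k < u.symm l) :
    let w : Perm (Fin (p + q)) := Fin.revPerm * u
    StrictAntiOn w {i | (w i).val < p} ∧ StrictAntiOn w {i | p ≤ (w i).val} := by
  have hsymm : ∀ k, (Fin.revPerm * u).symm k = u.symm k.rev := fun _ => rfl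
  refine ⟨Equiv.strictAntiOn_of_symm (t := {k : Fin (p + q) | k.val < p}) fun k _ l hl hkl => ?_,
    Equiv.strictAntiOn_of_symm (t := {k : Fin (p + q) | p ≤ k.val}) fun k hk l _ hkl => ?_⟩
  · rw [hsymm, hsymm]
    refine hu _ _ (Fin.rev_lt_rev.2 hkl) (Or.inr ?_)
    simp only [Set.mem_ofPred_eq] at hl
    rw [Fin.val_rev]
    omega
  · rw [hsymm, hsymm]
    refine hu _ _ (Fin.rev_lt_rev.2 hkl) (Or.inl ?_)
    simp only [Set.mem_ofPred_eq] at hk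
    rw [Fin.val_rev]
    omega

variable {p q : ℕ} {γ : Clan p q} {w : Perm (Fin (p + q))}

lemma plusSet_eq_of_isUPerm (h : IsUPerm γ w) : γ.plusSet = univ.filter fun i => (w i).val < p := by
  ext i
  simp only [mem_filter, mem_univ, true_and]
  by_cases hi : i ∈ γ.plusSet
  · have := (h i).1 hi
    simp only [hi, true_iff]
    omega
  · have hlt : #{j | j ∉ γ.plusSet ∧ j < i} < #γ.plusSetᶜ := by
      refine card_lt_card ((ssubset_iff_of_subset fun j hj => ?_).2 ⟨i, by simpa using hi, ?_⟩)
      · exact mem_compl.2 (mem_filter.1 hj).2.1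
      · simp
    have := (h i).2 hi
    rw [card_compl, Fintype.card_fin, γ.card_plusSet] at hlt
    simp only [hi, false_iff]
    omega

lemma isUPerm_of_plusSet_eq (hlow : StrictAntiOn w {i | (w i).val < p})
    (hhigh : StrictAntiOn w {i | p ≤ (w i).val})
    (h : γ.plusSet = univ.filter fun i => (w i).val < p) : IsUPerm γ w := by
  intro i
  rw [h]
  refine ⟨fun hi => ?_, fun hi => ?_⟩
  · rw [mem_filter] at hi
    rw [filter_filter, card_filter_lt_of_strictAntiOn (Q := fun k => k.val < p) hlow hi.2]
    have : #{k : Fin (p + q) | k.val < p ∧ w i < k} = p - (w i + 1) := by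
      rw [← card_filter_le_val_lt (n := p + q) (a := w i + 1) (b := p) (by omega)]
      exact congrArg card (filter_congr fun k _ => by rw [Fin.lt_def]; omega)
    omega
  · have hi : p ≤ (w i).val := by simpa using hi
    have hcongr : (univ.filter fun j => j ∉ univ.filter (fun i => (w i).val < p) ∧ j < i) =
        univ.filter fun j => p ≤ (w j).val ∧ j < i := filter_congr fun j _ => by simp
    rw [hcongr, card_filter_lt_of_strictAntiOn (Q := fun k => p ≤ k.val) hhigh hi]
    have : #{k : Fin (p + q) | p ≤ k.val ∧ w i < k} = p + q - (w i + 1) := by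
      rw [← card_filter_le_val_lt (a := w i + 1) le_rfl]
      exact congrArg card (filter_congr fun k _ => by rw [Fin.lt_def]; omega)
    omega

lemma tplusSet_eq_of_isVPerm {v : Perm (Fin (p + q))} (h : IsVPerm γ v) :
    γ.tplusSet = univ.filter fun i => (v i).val < p := by
  ext i
  simp only [mem_filter, mem_univ, true_and]
  by_cases hi : i ∈ γ.tplusSet
  · have hlt : #{j ∈ γ.tplusSet | j < i} < #γ.tplusSet :=
      card_lt_card (filter_ssubset.2 ⟨i, hi, lt_irrefl i⟩)
    have := (h i).1 hi
    rw [γ.card_tplusSet] at hlt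
    simp only [hi, true_iff]
    omega
  · have := (h i).2 hi
    simp only [hi, false_iff]
    omega

lemma isVPerm_of_tplusSet_eq {v : Perm (Fin (p + q))} (hlow : StrictMonoOn v {i | (v i).val < p})
    (hhigh : StrictMonoOn v {i | p ≤ (v i).val})
    (h : γ.tplusSet = univ.filter fun i => (v i).val < p) : IsVPerm γ v := by
  intro i
  rw [h]
  refine ⟨fun hi => ?_, fun hi => ?_⟩
  · rw [mem_filter] at hi
    rw [filter_filter, card_filter_lt_of_strictMonoOn (Q := fun k => k.val < p) hlow hi.2,
      ← Fin.card_Iio (v i)]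
    exact congrArg card (by
      ext k
      simp only [mem_Iio, mem_filter, mem_univ, true_and, Fin.lt_def]
      omega)
  · have hi : p ≤ (v i).val := by simpa using hi
    have hcongr : (univ.filter fun j => j ∉ univ.filter (fun i => (v i).val < p) ∧ j < i) =
        univ.filter fun j => p ≤ (v j).val ∧ j < i := filter_congr fun j _ => by simp
    rw [hcongr, card_filter_lt_of_strictMonoOn (Q := fun k => p ≤ k.val) hhigh hi]
    have : #{k : Fin (p + q) | p ≤ k.val ∧ k < v i} = v i - p := by
      rw [← card_filter_le_val_lt (a := p) (v i).isLt.le]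
      exact congrArg card (filter_congr fun k _ => by rw [Fin.lt_def])
    omega

lemma isUPerm_iff (hlow : StrictAntiOn w {i | (w i).val < p})
    (hhigh : StrictAntiOn w {i | p ≤ (w i).val}) :
    IsUPerm γ w ↔ γ.plusSet = univ.filter fun i => (w i).val < p :=
  ⟨plusSet_eq_of_isUPerm, isUPerm_of_plusSet_eq hlow hhigh⟩

lemma isVPerm_iff {v : Perm (Fin (p + q))} (hlow : StrictMonoOn v {i | (v i).val < p})
    (hhigh : StrictMonoOn v {i | p ≤ (v i).val}) :
    IsVPerm γ v ↔ γ.tplusSet = univ.filter fun i => (v i).val < p :=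
  ⟨tplusSet_eq_of_isVPerm, isVPerm_of_tplusSet_eq hlow hhigh⟩

end Shuffle

section RankMatrix

variable {n : ℕ}

lemma prefixCount_filter_apply_val_lt (w : Equiv.Perm (Fin n)) (i j : ℕ) :
    Bracket.prefixCount (univ.filter fun k => (w k).val < j) i = rankMatrix w i j := by
  rw [Bracket.prefixCount, rankMatrix, filter_filter]
  simp_rw [and_comm]

lemma rankMatrix_min (w : Equiv.Perm (Fin n)) (i j : ℕ) :
    rankMatrix w (min i n) (min j n) = rankMatrix w i j :=
  congrArg card (filter_congr fun k _ => by have := k.isLt; have := (w k).isLt; omega)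

lemma rankMatrix_le_rankMatrix {w v : Equiv.Perm (Fin n)}
    (h : ∀ i j : ℕ, 1 ≤ i → i ≤ n → 1 ≤ j → j ≤ n → rankMatrix w i j ≤ rankMatrix v i j)
    (i j : ℕ) : rankMatrix w i j ≤ rankMatrix v i j := by
  rw [← rankMatrix_min w, ← rankMatrix_min v]
  by_cases hi : min i n = 0
  · simp [rankMatrix, hi]
  by_cases hj : min j n = 0
  · simp [rankMatrix, hj]
  exact h _ _ (by omega) (min_le_right _ _) (by omega) (min_le_right _ _)

end RankMatrix

theorem exists_unique_clan_of_pq_pair_general {p q : ℕ}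
    (u v : Equiv.Perm (Fin (p + q)))
    (hu : ∀ k l : Fin (p + q), k < l → (l.val < q ∨ q ≤ k.val) →
      u.symm k < u.symm l)
    (hv : ∀ k l : Fin (p + q), k < l → (l.val < p ∨ p ≤ k.val) →
      v.symm k < v.symm l)
    (hcomp : ∀ i j : ℕ, 1 ≤ i → i ≤ p + q → 1 ≤ j → j ≤ p + q →
      rankMatrix (Fin.revPerm * u) i j ≤ rankMatrix v i j) :
    ∃! γ : Clan p q, γ.Avoids1212 ∧ IsUPerm γ (Fin.revPerm * u) ∧ IsVPerm γ v := by
  set w := Fin.revPerm * u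
  obtain ⟨hw_low, hw_high⟩ := strictAntiOn_revPerm_mul_of_shuffle hu
  obtain ⟨hv_low, hv_high⟩ := strictMonoOn_of_shuffle hv
  have hcard (e : Equiv.Perm (Fin (p + q))) : #{i | (e i).val < p} = p :=
    card_filter_apply_val_lt e (Nat.le_add_right p q)
  have hballot : ∀ i, Bracket.prefixCount (univ.filter fun k => (w k).val < p) i ≤
      Bracket.prefixCount (univ.filter fun k => (v k).val < p) i := fun i => by
    simpa only [prefixCount_filter_apply_val_lt] using rankMatrix_le_rankMatrix hcomp i p
  refine (existsUnique_congr fun γ => and_congr_right' (and_congr (isUPerm_iff hw_low hw_high)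
    (isVPerm_iff hv_low hv_high))).2 ?_
  exact Clan.existsUnique_avoids1212 (hcard w)
    (Bracket.isBalanced_sdiff ((hcard w).trans (hcard v).symm) hballot)

/-- If `(u,v)` is a `(p,q)`-pair (`u` a shuffle of `1,…,q`
and `q+1,…,n`; `v` a shuffle of `1,…,p` and `p+1,…,n`) with `w₀u ≥ v` in the
Bruhat order, then there is a unique `(p,q)`-clan `γ` avoiding `(1,2,1,2)`
with `u(γ) = w₀u` and `v(γ) = v`. -/
theorem exists_unique_clan_of_pq_pair {p q : ℕ} (hn : 1 ≤ p + q)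
    (u v : Equiv.Perm (Fin (p + q)))
    (hu : ∀ k l : Fin (p + q), k < l → (l.val < q ∨ q ≤ k.val) →
      u.symm k < u.symm l)
    (hv : ∀ k l : Fin (p + q), k < l → (l.val < p ∨ p ≤ k.val) →
      v.symm k < v.symm l)
    (hcomp : ∀ i j : ℕ, 1 ≤ i → i ≤ p + q → 1 ≤ j → j ≤ p + q →
      rankMatrix (Fin.revPerm * u) i j ≤ rankMatrix v i j) :
    ∃! γ : Clan p q, γ.Avoids1212 ∧ IsUPerm γ (Fin.revPerm * u) ∧ IsVPerm γ v :=
  exists_unique_clan_of_pq_pair_general u v hu hv hcomp
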